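/- For every symbol a ∈ Σ and every disjunctive multiplicity expression E, the set {x ∈ ℕ | ∃ w ∈ L(E), w(a) = x} equals ⟦M⟧ for some multiplicity M ∈ {*, +, ?, 0, 1}; that is, the set of possible occurrence counts of each symbol is one of ℕ, ℕ\{0}, {0,1}, {0}, {1}. -/

import Mathlib

open scoped Classical

variable {α : Type}

/-- Unordered words: multisets of symbols, as occurrence-count functions. -/
abbrev UWord (α : Type) := α → ℕ

/-- Multiplicities `*`, `+`, `?`, `0`, `1`. -/
inductive Mult : Type where
  | zero | one | opt | plus | star
deriving DecidableEq

/-- Interpretation of multiplicities as sets of natural numbers. -/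
def Mult.sem : Mult → Set ℕ
  | .zero => {0}
  | .one => {1}
  | .opt => {0, 1}
  | .plus => {n | 0 < n}
  | .star => Set.univ

/-- A disjunction `a₁^{M₁} | … | a_k^{M_k}`. -/
abbrev Disj (α : Type) := List (α × Mult)

/-- A disjunctive multiplicity expression `D₁^{M₁} ⊎ … ⊎ D_n^{M_n}`. -/
abbrev DME (α : Type) := List (Disj α × Mult)

/-- Language of `a^M`. -/
def singleLang (a : α) (m : Mult) : Set (UWord α) :=
  {w | w a ∈ m.sem ∧ ∀ b, b ≠ a → w b = 0}

/-- Language of a disjunction. -/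
def disjLang (D : Disj α) : Set (UWord α) :=
  {w | ∃ p ∈ D, w ∈ singleLang p.1 p.2}

/-- Pointwise (multiset) sum of a list of unordered words. -/
def sumWords (ws : List (UWord α)) : UWord α := fun a => (ws.map (fun u => u a)).sum

/-- Language of `D^M`. -/
def powLang (L : Set (UWord α)) (m : Mult) : Set (UWord α) :=
  {w | ∃ ws : List (UWord α), ws.length ∈ m.sem ∧ (∀ u ∈ ws, u ∈ L) ∧ w = sumWords ws}

/-- Language of a disjunctive multiplicity expression. -/
def dmeLang (E : DME α) : Set (UWord α) :=
  {w | ∃ ws : List (UWord α),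
      List.Forall₂ (fun p u => u ∈ powLang (disjLang p.1) p.2) E ws ∧ w = sumWords ws}

/-- Symbols occurring in a disjunctive multiplicity expression. -/
def dmeSymbols (E : DME α) : List α := E.flatMap (fun p => p.1.map Prod.fst)

/-- Normalized disjunctive multiplicity expression (each symbol occurs at most once,
each disjunction nonempty, and the two normal-form conditions of the paper). -/
def Normalized (E : DME α) : Prop :=
  (dmeSymbols E).Nodup ∧
  ∀ p ∈ E, p.1 ≠ [] ∧
    (p.2 ≠ Mult.one → p.2 = Mult.plus ∧ ∀ q ∈ p.1, q.2 = Mult.one) ∧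
    ((∃ q ∈ p.1, (0 : ℕ) ∈ q.2.sem) → ∀ q ∈ p.1, (0 : ℕ) ∈ q.2.sem)

/-- Conflicting pairs of siblings `C_E`. -/
def CE (E : DME α) : Set (α × α) :=
  {p | ¬ ∃ w ∈ dmeLang E, w p.1 ≠ 0 ∧ w p.2 ≠ 0}

/-- Extended cardinality map `N_E`. -/
def NE (E : DME α) : Set (α × ℕ) :=
  {p | ∃ w ∈ dmeLang E, w p.1 = p.2}

/-- Sets of required symbols `P_E`. -/
def PE (E : DME α) : Set (Set α) :=
  {X | ∀ w ∈ dmeLang E, ∃ a ∈ X, w a ≠ 0}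

/-- Consistency of an unordered word with a characterizing triple. -/
def ConsTriple (w : UWord α) (C : Set (α × α)) (N : Set (α × ℕ)) (P : Set (Set α)) : Prop :=
  (∀ p ∈ C, ¬ (w p.1 ≠ 0 ∧ w p.2 ≠ 0)) ∧
  (∀ a, (a, w a) ∈ N) ∧
  (∀ X ∈ P, ∃ a ∈ X, w a ≠ 0)

/-- Language of a disjunction-free multiplicity expression given as a list of
symbol/multiplicity pairs. -/
def dfLang (l : List (α × Mult)) : Set (UWord α) :=
  {w | (∀ p ∈ l, w p.1 ∈ p.2.sem) ∧ ∀ b, b ∉ l.map Prod.fst → w b = 0}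

/-- Finite unordered trees. -/
inductive UTree (α : Type) : Type where
  | node : α → List (UTree α) → UTree α

def UTree.lab : UTree α → α | .node a _ => a

def UTree.children : UTree α → List (UTree α) | .node _ ts => ts

/-- Twig queries: labels in `Σ ∪ {⋆}` (wildcard = `none`); each child subquery is tagged
with `false` for a child edge and `true` for a descendant edge. -/
inductive Twig (α : Type) : Type where
  | node : Option α → List (Twig α × Bool) → Twig α

/-- Proper subtree (proper descendant) relation. -/
inductive StrictDesc : UTree α → UTree α → Prop where
  | child {s t : UTree α} : s ∈ t.children → StrictDesc s t
  | step {s u t : UTree α} : StrictDesc s u → u ∈ t.children → StrictDesc s t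

/-- `Sat t q`: the twig query `q` can be embedded in the tree `t`
(root to root, child edges to child edges, descendant edges to proper descendants,
labels preserved up to wildcard). -/
def Sat : UTree α → Twig α → Prop
  | t, .node l qs =>
      (∀ x ∈ l, x = t.lab) ∧
      ∀ p ∈ qs, (p.2 = false → ∃ t' ∈ t.children, Sat t' p.1) ∧
                (p.2 = true → ∃ t', StrictDesc t' t ∧ Sat t' p.1)
termination_by t q => sizeOf q
decreasing_by
  all_goals
    obtain ⟨q', b'⟩ := p
    have h1 : sizeOf ((q', b') : Twig α × Bool) < sizeOf qs := List.sizeOf_lt_of_mem (by assumption)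
    simp at h1 ⊢
    omega

/-- `TEmb t' t` : the tree `t'` can be embedded in the tree `t` (root-, child-, and
label-preserving). -/
def TEmb : UTree α → UTree α → Prop
  | .node a ts', t => t.lab = a ∧ ∀ s' ∈ ts', ∃ s ∈ t.children, TEmb s' s

/-- `QGEmb E a q` : the twig query `q` can be embedded in the rooted graph with edge
relation `E` at root `a`. -/
def QGEmb (E : α → α → Prop) : α → Twig α → Prop
  | a, .node l qs =>
      (∀ x ∈ l, x = a) ∧
      ∀ p ∈ qs, (p.2 = false → ∃ b, E a b ∧ QGEmb E b p.1) ∧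
                (p.2 = true → ∃ b, Relation.TransGen E a b ∧ QGEmb E b p.1)
termination_by a q => sizeOf q
decreasing_by
  all_goals
    obtain ⟨q', b'⟩ := p
    have h1 : sizeOf ((q', b') : Twig α × Bool) < sizeOf qs := List.sizeOf_lt_of_mem (by assumption)
    simp at h1 ⊢
    omega

/-- Labeled paths of a tree: sequences of labels along root-to-node paths. -/
inductive IsLabPath : UTree α → List α → Prop where
  | root {a : α} {ts : List (UTree α)} : IsLabPath (UTree.node a ts) [a]
  | cons {a : α} {ts : List (UTree α)} {s : UTree α} {p : List α} :
      s ∈ ts → IsLabPath s p → IsLabPath (UTree.node a ts) (a :: p)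

/-- Paths of a rooted graph: nonempty vertex sequences starting at the root and
following edges. -/
def IsGPath (E : α → α → Prop) (root : α) (p : List α) : Prop :=
  p ≠ [] ∧ p.head? = some root ∧ p.Chain' E

/-- The unfolding of a rooted graph, truncated at depth `n`.  For a graph with no cycle
reachable from the root, taking `n = Fintype.card α` yields the full unfolding. -/
noncomputable def unfoldG [Fintype α] (E : α → α → Prop) : ℕ → α → UTree α
  | 0, a => .node a []
  | n + 1, a => .node a (((Finset.univ.filter fun b => E a b).toList).map (unfoldG E n))

/-- Number of leaves of a tree. -/
def leafCount : UTree α → ℕ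
  | .node _ ts => if ts.isEmpty then 1 else (ts.attach.map (fun s => leafCount s.1)).sum
decreasing_by
  have h1 := List.sizeOf_lt_of_mem s.2
  simp
  omega

/-- Disjunction-free multiplicity schema: a root label together with, for each label `a`,
a disjunction-free multiplicity expression given as the multiplicity `R a b` of every
symbol `b` (`Mult.zero` meaning `b` does not occur). -/
structure MS (α : Type) where
  root : α
  R : α → α → Mult

/-- Every node's children-label multiset matches the rule for the node's label. -/
inductive LocalOK [DecidableEq α] (R : α → α → Mult) : UTree α → Prop where
  | node {a : α} {ts : List (UTree α)} :
      (∀ b, ((ts.map UTree.lab).count b) ∈ (R a b).sem) →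
      (∀ s ∈ ts, LocalOK R s) →
      LocalOK R (UTree.node a ts)

/-- A tree satisfies a disjunction-free multiplicity schema. -/
def SatS [DecidableEq α] (S : MS α) (t : UTree α) : Prop :=
  t.lab = S.root ∧ LocalOK S.R t

/-- Edges of the universal dependency graph: `b` occurs in `R a` with multiplicity `+` or `1`. -/
def uEdge (S : MS α) (a b : α) : Prop := S.R a b = Mult.plus ∨ S.R a b = Mult.one

/-- Edges of the dependency graph: `b` occurs in `R a` with multiplicity in `{*,+,?,1}`. -/
def dEdge (S : MS α) (a b : α) : Prop := S.R a b ≠ Mult.zero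

/-- A simulation of the rooted graph `(α, root, E)` in the tree `t`. -/
def IsSimulation (E : α → α → Prop) (root : α) (t : UTree α) (R : α → UTree α → Prop) : Prop :=
  R root t ∧ (∀ a s, R a s → s.lab = a) ∧
  (∀ a s, R a s → ∀ b, E a b → ∃ s' ∈ s.children, R b s')

/-- One fuse step: two sibling nodes with the same label are merged into a single node
whose children are the children of both (applied anywhere in the tree). -/
inductive Fuse : UTree α → UTree α → Prop where
  | here {a b : α} {l₁ l₂ l₃ cs₁ cs₂ : List (UTree α)} :
      Fuse (UTree.node a (l₁ ++ UTree.node b cs₁ :: l₂ ++ UTree.node b cs₂ :: l₃))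
           (UTree.node a (l₁ ++ UTree.node b (cs₁ ++ cs₂) :: l₂ ++ l₃))
  | there {a : α} {s s' : UTree α} {l₁ l₂ : List (UTree α)} :
      Fuse s s' → Fuse (UTree.node a (l₁ ++ s :: l₂)) (UTree.node a (l₁ ++ s' :: l₂))

/-- One add step: an arbitrary new subtree is attached as an additional child of some
node of the tree. -/
inductive AddOp : UTree α → UTree α → Prop where
  | here {a : α} {s : UTree α} {l : List (UTree α)} :
      AddOp (UTree.node a l) (UTree.node a (s :: l))
  | there {a : α} {s s' : UTree α} {l₁ l₂ : List (UTree α)} :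
      AddOp s s' → AddOp (UTree.node a (l₁ ++ s :: l₂)) (UTree.node a (l₁ ++ s' :: l₂))


/-!
Evaluation at a symbol `a` is additive, so the counts of `a` in `L(E)` are the pointwise sum of
its counts in the components `D^M`. In a normalized expression every component is nonempty and
`a` occurs in at most one of them, so all other components contribute `{0}`. If `a^m` occurs in
`D`, a word of `D` contributes a count in `⟦m⟧`, or `0` when it uses another symbol of `D`. The
normal form leaves two cases: `M = 1`, giving `⟦m⟧` or `⟦m⟧ ∪ {0}`, and `M = +` with `m = 1`,
giving `ℕ ∖ {0}` or `ℕ`.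
-/

open scoped Pointwise

namespace Mult

theorem sem_nonempty (m : Mult) : m.sem.Nonempty := by
  cases m
  case plus => exact ⟨1, Nat.one_pos⟩
  all_goals simp [sem]

theorem exists_sem_eq_insert_zero (m : Mult) : ∃ M : Mult, M.sem = insert 0 m.sem := by
  cases m
  · exact ⟨zero, by simp [sem]⟩
  · exact ⟨opt, rfl⟩
  · exact ⟨opt, by simp [sem]⟩
  · exact ⟨star, by ext n; simp [sem]; omega⟩
  · exact ⟨star, by simp [sem]⟩

end Mult

def powSums (S : Set ℕ) (m : Mult) : Set ℕ :=
  {x | ∃ xs : List ℕ, xs.length ∈ m.sem ∧ (∀ y ∈ xs, y ∈ S) ∧ x = xs.sum}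

theorem powSums_one (S : Set ℕ) : powSums S .one = S := by
  ext x
  constructor
  · rintro ⟨xs, hlen, hxs, rfl⟩
    obtain ⟨y, rfl⟩ := List.length_eq_one_iff.mp hlen
    simpa using hxs
  · exact fun hx => ⟨[x], rfl, by simpa using hx, by simp⟩

theorem powSums_zero (m : Mult) : powSums {0} m = {0} := by
  refine Set.eq_singleton_iff_unique_mem.mpr ⟨?_, ?_⟩
  · obtain ⟨k, hk⟩ := m.sem_nonempty
    exact ⟨List.replicate k 0, by simpa using hk, by simp, by simp⟩
  · rintro _ ⟨xs, -, hxs, rfl⟩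
    exact List.sum_eq_zero hxs

theorem powSums_one_plus : powSums Mult.one.sem .plus = Mult.plus.sem := by
  ext x
  constructor
  · rintro ⟨xs, hlen, hxs, rfl⟩
    rw [List.eq_replicate_of_mem hxs]
    simpa [Mult.sem] using hlen
  · intro hx
    exact ⟨List.replicate x 1, by simpa using hx, by simp [Mult.sem], by simp⟩

theorem powSums_insert_zero_one_plus :
    powSums (insert 0 Mult.one.sem) .plus = Mult.star.sem := by
  refine Set.eq_univ_of_forall fun x => ?_
  rcases Nat.eq_zero_or_pos x with rfl | hx
  · exact ⟨[0], by simp [Mult.sem], by simp, rfl⟩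
  · exact ⟨List.replicate x 1, by simpa [Mult.sem] using hx, by simp [Mult.sem], by simp⟩

theorem sumWords_cons (u : UWord α) (ws : List (UWord α)) :
    sumWords (u :: ws) = u + sumWords ws := by
  funext a
  simp [sumWords]

theorem image_powLang (L : Set (UWord α)) (m : Mult) (a : α) :
    (· a) '' powLang L m = powSums ((· a) '' L) m := by
  ext x
  constructor
  · rintro ⟨_, ⟨ws, hlen, hws, rfl⟩, rfl⟩
    exact ⟨ws.map (· a), by simpa using hlen, by simpa using fun u hu => ⟨u, hws u hu, rfl⟩, rfl⟩
  · rintro ⟨xs, hlen, hxs, rfl⟩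
    choose! word hword using hxs
    refine ⟨sumWords (xs.map word),
      ⟨xs.map word, by simpa using hlen, by simpa using fun y hy => (hword y hy).1, rfl⟩, ?_⟩
    simp only [sumWords, List.map_map]
    congr 1
    exact (List.map_congr_left fun y hy => (hword y hy).2).trans (List.map_id' xs)

theorem single_mem_singleLang {a : α} {m : Mult} {c : ℕ} (hc : c ∈ m.sem) :
    Pi.single a c ∈ singleLang a m :=
  ⟨by simpa using hc, fun b hb => by simp [hb]⟩

theorem disjLang_nonempty {D : Disj α} (hD : D ≠ []) : (disjLang D).Nonempty := by
  obtain ⟨q, hq⟩ := List.exists_mem_of_ne_nil D hD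
  obtain ⟨c, hc⟩ := q.2.sem_nonempty
  exact ⟨Pi.single q.1 c, q, hq, single_mem_singleLang hc⟩

theorem sem_subset_image_disjLang {D : Disj α} {q : α × Mult} (hq : q ∈ D) :
    q.2.sem ⊆ (· q.1) '' disjLang D :=
  fun c hc => ⟨Pi.single q.1 c, ⟨q, hq, single_mem_singleLang hc⟩, by simp⟩

theorem image_disjLang_subset {D : Disj α} {a : α} {m : Mult}
    (hm : ∀ q ∈ D, q.1 = a → q.2 = m) : (· a) '' disjLang D ⊆ insert 0 m.sem := by
  rintro _ ⟨u, ⟨q, hq, hu⟩, rfl⟩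
  by_cases h : q.1 = a
  · right
    rw [← hm q hq h, ← h]
    exact hu.1
  · exact .inl (hu.2 a (Ne.symm h))

theorem image_disjLang_of_not_mem {D : Disj α} {a : α} (hD : D ≠ [])
    (ha : a ∉ D.map Prod.fst) : (· a) '' disjLang D = {0} := by
  have hsub : (· a) '' disjLang D ⊆ insert 0 Mult.zero.sem :=
    image_disjLang_subset fun q hq h => absurd (h ▸ List.mem_map_of_mem hq) ha
  exact ((disjLang_nonempty hD).image _).subset_singleton_iff.mp (by simpa [Mult.sem] using hsub)

theorem image_disjLang_of_mem {D : Disj α} (hnd : (D.map Prod.fst).Nodup) {q : α × Mult}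
    (hq : q ∈ D) :
    (· q.1) '' disjLang D = q.2.sem ∨ (· q.1) '' disjLang D = insert 0 q.2.sem := by
  have hsub := image_disjLang_subset fun q' hq' h =>
    congrArg Prod.snd (List.inj_on_of_nodup_map hnd hq' hq h)
  have hsup := sem_subset_image_disjLang hq
  by_cases h0 : 0 ∈ (· q.1) '' disjLang D
  · exact .inr (hsub.antisymm (Set.insert_subset h0 hsup))
  · exact .inl (Set.Subset.antisymm
      (fun x hx => (hsub hx).resolve_left (by rintro rfl; exact h0 hx)) hsup)

theorem image_powLang_of_not_mem {D : Disj α} {a : α} (hD : D ≠ [])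
    (ha : a ∉ D.map Prod.fst) (m : Mult) : (· a) '' powLang (disjLang D) m = {0} := by
  rw [image_powLang, image_disjLang_of_not_mem hD ha, powSums_zero]

theorem dmeLang_nil : dmeLang ([] : DME α) = {0} := by
  ext w
  simp only [dmeLang, List.forall₂_nil_left_iff, exists_eq_left, Set.mem_singleton_iff]
  rfl

theorem dmeLang_cons (p : Disj α × Mult) (E : DME α) :
    dmeLang (p :: E) = powLang (disjLang p.1) p.2 + dmeLang E := by
  ext w
  simp only [dmeLang, List.forall₂_cons_left_iff, Set.mem_add, Set.mem_ofPred_eq]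
  constructor
  · rintro ⟨_, ⟨u, ws, hu, hws, rfl⟩, rfl⟩
    exact ⟨u, hu, _, ⟨ws, hws, rfl⟩, (sumWords_cons u ws).symm⟩
  · rintro ⟨u, hu, _, ⟨ws, hws, rfl⟩, rfl⟩
    exact ⟨u :: ws, ⟨u, ws, hu, hws, rfl⟩, sumWords_cons u ws⟩

theorem image_dmeLang_cons (p : Disj α × Mult) (E : DME α) (a : α) :
    (· a) '' dmeLang (p :: E) = (· a) '' powLang (disjLang p.1) p.2 + (· a) '' dmeLang E := by
  rw [dmeLang_cons]
  exact Set.image_add (Pi.evalAddMonoidHom (fun _ => ℕ) a)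

theorem image_dmeLang_of_not_mem {E : DME α} (hne : ∀ p ∈ E, p.1 ≠ []) {a : α}
    (ha : a ∉ dmeSymbols E) : (· a) '' dmeLang E = {0} := by
  induction E with
  | nil => simp [dmeLang_nil]
  | cons p E ih =>
    simp only [dmeSymbols, List.flatMap_cons, List.mem_append, not_or] at ha
    rw [image_dmeLang_cons, image_powLang_of_not_mem (hne p (by simp)) ha.1,
      ih (fun q hq => hne q (by simp [hq])) ha.2, Set.singleton_add_singleton, add_zero]

theorem image_dmeLang_of_mem {E : DME α} (hnd : (dmeSymbols E).Nodup)
    (hne : ∀ p ∈ E, p.1 ≠ []) {p : Disj α × Mult} (hp : p ∈ E) {a : α}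
    (ha : a ∈ p.1.map Prod.fst) : (· a) '' dmeLang E = (· a) '' powLang (disjLang p.1) p.2 := by
  induction E with
  | nil => cases hp
  | cons q E ih =>
    have hne' : ∀ r ∈ E, r.1 ≠ [] := fun r hr => hne r (by simp [hr])
    rw [dmeSymbols, List.flatMap_cons, List.nodup_append] at hnd
    rw [image_dmeLang_cons]
    rcases List.mem_cons.mp hp with rfl | hp
    · rw [image_dmeLang_of_not_mem hne' fun h => hnd.2.2 a ha a h rfl,
        Set.singleton_zero, add_zero]
    · have haq : a ∉ q.1.map Prod.fst :=
        fun h => hnd.2.2 a h a (List.mem_flatMap.mpr ⟨p, hp, ha⟩) rfl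
      rw [image_powLang_of_not_mem (hne q (by simp)) haq, ih hnd.2.1 hne' hp,
        Set.singleton_zero, zero_add]

/-- for every symbol, the set of its possible occurrence counts in words of
the language of a normalized disjunctive multiplicity expression is the interpretation
of some multiplicity. -/
theorem occurrence_counts_are_a_multiplicity
    {α : Type} (E : DME α) (hE : Normalized E) :
    ∀ a : α, ∃ M : Mult, {x : ℕ | ∃ w ∈ dmeLang E, w a = x} = M.sem := by
  intro a
  obtain ⟨hnd, hnorm⟩ := hE
  have hne : ∀ p ∈ E, p.1 ≠ [] := fun p hp => (hnorm p hp).1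
  change ∃ M : Mult, (· a) '' dmeLang E = M.sem
  by_cases ha : a ∈ dmeSymbols E
  · obtain ⟨p, hp, hpa⟩ := List.mem_flatMap.mp ha
    obtain ⟨q, hq, rfl⟩ := List.mem_map.mp hpa
    rw [image_dmeLang_of_mem hnd hne hp hpa, image_powLang]
    have hcounts := image_disjLang_of_mem ((List.nodup_flatMap.mp hnd).1 p hp) hq
    by_cases hone : p.2 = .one
    · rw [hone, powSums_one]
      rcases hcounts with h | h
      · exact ⟨q.2, h⟩
      · rw [h]
        obtain ⟨M, hM⟩ := q.2.exists_sem_eq_insert_zero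
        exact ⟨M, hM.symm⟩
    · obtain ⟨hplus, hall_one⟩ := (hnorm p hp).2.1 hone
      rw [hplus]
      rw [hall_one q hq] at hcounts
      rcases hcounts with h | h
      · exact ⟨.plus, by rw [h, powSums_one_plus]⟩
      · exact ⟨.star, by rw [h, powSums_insert_zero_one_plus]⟩
  · exact ⟨.zero, image_dmeLang_of_not_mem hne ha⟩
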